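/- Let E, F be vector lattices with F Dedekind complete, φ : E → ℝ a positive abstract Uryson functional, u ∈ F₊, and S = φ ⊗ u the one-dimensional operator Se = φ(e)u. Then for every positive abstract Uryson operator T and e ∈ E, the band projection onto {S}^⊥ satisfies σ_S T e = ρ_u^⊥ T e + inf over ε > 0 of sup{ ρ_u T f : φ(f) ≤ ε φ(e), f a fragment of e }, where ρ_u is the band projection onto {u}^⊥⊥. -/

import Mathlib

/-- Orthogonal additivity: `T (x + y) = T x + T y` whenever `|x| ⊓ |y| = 0`. -/
def OrthAdd {E F : Type*} [Lattice E] [AddCommGroup E] [AddCommGroup F]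
    (T : E → F) : Prop :=
  ∀ x y : E, |x| ⊓ |y| = 0 → T (x + y) = T x + T y

/-- `T` maps order bounded sets to order bounded sets. -/
def OrderBoundedMap {E F : Type*} [Preorder E] [Preorder F] (T : E → F) : Prop :=
  ∀ a b : E, ∃ c d : F, ∀ x ∈ Set.Icc a b, T x ∈ Set.Icc c d

/-- An abstract Uryson operator: orthogonally additive and order bounded. -/
def Uryson {E F : Type*} [Lattice E] [AddCommGroup E] [Lattice F] [AddCommGroup F]
    (T : E → F) : Prop :=
  OrthAdd T ∧ OrderBoundedMap T

/-- `z` is a fragment (component) of `x`: `z ⊥ (x - z)`. -/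
def Fragment {E : Type*} [Lattice E] [AddCommGroup E] (z x : E) : Prop :=
  |z| ⊓ |x - z| = 0

/-- A band (order) projection on a Dedekind complete vector lattice `F`:
additive, idempotent, and `0 ≤ ρ x ≤ x` for all `x ≥ 0`. -/
def IsBandProj {F : Type*} [Lattice F] [AddCommGroup F] (ρ : F → F) : Prop :=
  (∀ x y : F, ρ (x + y) = ρ x + ρ y) ∧ (∀ x, ρ (ρ x) = ρ x) ∧
    ∀ x : F, 0 ≤ x → 0 ≤ ρ x ∧ ρ x ≤ x

/-- Disjointness of two positive abstract Uryson operators `T, S` in `U(E,F)`: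
`T ⊓ S = 0`, i.e. every abstract Uryson operator `R` with `R ≤ T` and `R ≤ S`
(pointwise, which is the order of `U(E,F)`) satisfies `R ≤ 0`. -/
def UDisjointPos {E F : Type*} [Lattice E] [AddCommGroup E] [Lattice F] [AddCommGroup F]
    (T S : E → F) : Prop :=
  ∀ R : E → F, Uryson R → (∀ x, R x ≤ T x) → (∀ x, R x ≤ S x) → ∀ x, R x ≤ 0


/-!
Write `G = ρ_u ∘ T` and `J x = inf_{δ>0} sup {G g : g ⊑ x, φ g ≤ δ}`. The operator
`T - ρ_u T + J` is orthogonally additive (fragments of `x + y` with `x ⊥ y` split along `x`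
and `y`), lies between `0` and `T`, and is disjoint from `φ ⊗ u`: a common minorant `V`
satisfies `(V x)⁺ + sup_{φ g ≤ ε} G g ≤ ε u + sup_{φ g ≤ 2ε} G g`, and iterating this along
`ε = 2⁻ⁿ` shows that `n (V x)⁺` is bounded for all `n`. Since `T - R` lies in `{S}^⊥⊥`, this
gives `T - ρ_u T + J ≤ R`. Conversely, the part of `T - R` in `{u}^⊥` is disjoint from `S`,
hence zero, so `R - ρ_u R = T - ρ_u T`; and `ρ_u R e ≤ sup_{φ g ≤ δ} G g` for every `δ > 0`,
because `(ρ_u R e - sup_{φ g ≤ δ} G g) ∧ δu` is bounded by the value at `e` of `R ∧ S = 0`,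
computed as `inf {R f + S (e - f) : f ⊑ e}`.
-/

section LatticeOrderedGroup

lemma inf_eq_zero_of_le {α : Type*} [Lattice α] [Zero α] {a b c d : α} (ha : 0 ≤ a) (hb : 0 ≤ b)
    (hac : a ≤ c) (hbd : b ≤ d) (h : c ⊓ d = 0) : a ⊓ b = 0 :=
  le_antisymm ((inf_le_inf hac hbd).trans_eq h) (le_inf ha hb)

variable {α : Type*} [Lattice α] [AddCommGroup α] [AddLeftMono α] {a b c d : α}

lemma inf_add_le_inf_add_inf (ha : 0 ≤ a) (hb : 0 ≤ b) (hc : 0 ≤ c) :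
    a ⊓ (b + c) ≤ a ⊓ b + a ⊓ c :=
  calc a ⊓ (b + c) ≤ (a ⊓ b + a) ⊓ (a ⊓ b + c) :=
        le_inf (inf_le_left.trans (le_add_of_nonneg_left (le_inf ha hb)))
          ((inf_le_inf_right _ (le_add_of_nonneg_right hc)).trans_eq (inf_add a b c).symm)
    _ = a ⊓ b + a ⊓ c := (add_inf a c _).symm

lemma inf_add_eq_zero (ha : 0 ≤ a) (hb : 0 ≤ b) (hc : 0 ≤ c) (hab : a ⊓ b = 0)
    (hac : a ⊓ c = 0) : a ⊓ (b + c) = 0 :=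
  le_antisymm (by simpa [hab, hac] using inf_add_le_inf_add_inf ha hb hc)
    (le_inf ha (add_nonneg hb hc))

lemma add_inf_add_eq_zero (ha : 0 ≤ a) (hb : 0 ≤ b) (hc : 0 ≤ c) (hd : 0 ≤ d)
    (hac : a ⊓ c = 0) (had : a ⊓ d = 0) (hbc : b ⊓ c = 0) (hbd : b ⊓ d = 0) :
    (a + b) ⊓ (c + d) = 0 := by
  refine inf_add_eq_zero (add_nonneg ha hb) hc hd ?_ ?_ <;> rw [inf_comm] <;>
    refine inf_add_eq_zero ‹_› ha hb ?_ ?_ <;> rwa [inf_comm]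

lemma inf_nsmul_eq_zero (ha : 0 ≤ a) (hb : 0 ≤ b) (h : a ⊓ b = 0) (n : ℕ) : a ⊓ n • b = 0 := by
  induction n with
  | zero => simpa using inf_eq_left.2 ha
  | succ n ih => rw [succ_nsmul]; exact inf_add_eq_zero ha (nsmul_nonneg hb n) hb ih h

lemma add_eq_sup_of_inf_eq_zero (h : a ⊓ b = 0) : a + b = a ⊔ b := by
  rw [← inf_add_sup, h, zero_add]

lemma le_of_le_add_of_inf_eq_zero (ha : 0 ≤ a) (hb : 0 ≤ b) (hc : 0 ≤ c) (h : a ≤ b + c)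
    (hac : a ⊓ c = 0) : a ≤ b :=
  calc a = a ⊓ (b + c) := (inf_eq_left.2 h).symm
    _ ≤ a ⊓ b + a ⊓ c := inf_add_le_inf_add_inf ha hb hc
    _ ≤ b := by rw [hac, add_zero]; exact inf_le_right

lemma inf_add_inf_eq_of_le_add (ha : 0 ≤ a) (hb : 0 ≤ b) (hc : 0 ≤ c) (hab : a ⊓ b = 0)
    (h : c ≤ a + b) : c ⊓ a + c ⊓ b = c := by
  refine le_antisymm ?_ ((inf_eq_left.2 h).ge.trans (inf_add_le_inf_add_inf hc ha hb))
  rw [add_eq_sup_of_inf_eq_zero (inf_eq_zero_of_le (le_inf hc ha) (le_inf hc hb)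
    inf_le_right inf_le_right hab)]
  exact sup_le inf_le_left inf_le_left

lemma abs_add_eq_of_inf_abs_eq_zero (h : |a| ⊓ |b| = 0) : |a + b| = |a| + |b| := by
  refine le_antisymm (abs_add_le a b) ?_
  have ha : |a| ≤ |a + b| + |b| := by simpa using abs_add_le (a + b) (-b)
  have hb : |b| ≤ |a + b| + |a| := by simpa using abs_add_le (a + b) (-a)
  rw [add_eq_sup_of_inf_eq_zero h]
  exact sup_le (le_of_le_add_of_inf_eq_zero (abs_nonneg a) (abs_nonneg _) (abs_nonneg b) ha h)
    (le_of_le_add_of_inf_eq_zero (abs_nonneg b) (abs_nonneg _) (abs_nonneg a) hb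
      (by rwa [inf_comm]))

lemma posPart_le_abs (a : α) : a⁺ ≤ |a| :=
  posPart_add_negPart a ▸ le_add_of_nonneg_right (negPart_nonneg a)

lemma negPart_le_abs (a : α) : a⁻ ≤ |a| :=
  posPart_add_negPart a ▸ le_add_of_nonneg_left (posPart_nonneg a)

lemma posPart_inf_eq_zero_of_inf_nonpos (hb : 0 ≤ b) (h : a ⊓ b ≤ 0) : a⁺ ⊓ b = 0 := by
  let _ := AddCommGroup.toDistribLattice α
  rw [posPart_def, inf_sup_right, inf_eq_left.2 hb, sup_eq_right.2 h]

end LatticeOrderedGroup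

section Fragments

lemma Fragment.compl {α : Type*} [Lattice α] [AddCommGroup α] {f x : α} (h : Fragment f x) :
    Fragment (x - f) x := by
  rw [Fragment, sub_sub_cancel, inf_comm]; exact h

variable {α : Type*} [Lattice α] [AddCommGroup α] [AddLeftMono α] {f x y f₁ f₂ : α}

lemma fragment_zero_left (x : α) : Fragment 0 x := by
  simp [Fragment]

lemma fragment_refl (x : α) : Fragment x x := by
  simp [Fragment]

namespace Fragment

lemma abs_add_abs_sub (h : Fragment f x) : |f| + |x - f| = |x| := by
  rw [← abs_add_eq_of_inf_abs_eq_zero h, add_sub_cancel]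

lemma abs_le (h : Fragment f x) : |f| ≤ |x| :=
  h.abs_add_abs_sub ▸ le_add_of_nonneg_right (abs_nonneg _)

lemma abs_inf_abs_eq_zero (hxy : |x| ⊓ |y| = 0) (h₁ : Fragment f₁ x) (h₂ : Fragment f₂ y) :
    |f₁| ⊓ |f₂| = 0 :=
  inf_eq_zero_of_le (abs_nonneg _) (abs_nonneg _) h₁.abs_le h₂.abs_le hxy

lemma add (hxy : |x| ⊓ |y| = 0) (h₁ : Fragment f₁ x) (h₂ : Fragment f₂ y) :
    Fragment (f₁ + f₂) (x + y) := by
  rw [Fragment, abs_add_eq_of_inf_abs_eq_zero (abs_inf_abs_eq_zero hxy h₁ h₂),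
    show x + y - (f₁ + f₂) = (x - f₁) + (y - f₂) by abel,
    abs_add_eq_of_inf_abs_eq_zero (abs_inf_abs_eq_zero hxy h₁.compl h₂.compl)]
  exact add_inf_add_eq_zero (abs_nonneg _) (abs_nonneg _) (abs_nonneg _) (abs_nonneg _) h₁
    (abs_inf_abs_eq_zero hxy h₁ h₂.compl)
    (by rw [inf_comm]; exact abs_inf_abs_eq_zero hxy h₁.compl h₂) h₂

end Fragment

/-- The component of `f` in the band generated by `x`, when `|f| ≤ |x| + |y|` with `x ⊥ y`. -/
def bandPart (x f : α) : α :=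
  f⁺ ⊓ |x| - f⁻ ⊓ |x|

lemma abs_bandPart (x f : α) : |bandPart x f| = f⁺ ⊓ |x| ⊔ f⁻ ⊓ |x| := by
  have h : f⁺ ⊓ |x| ⊓ (f⁻ ⊓ |x|) = 0 :=
    inf_eq_zero_of_le (le_inf (posPart_nonneg f) (abs_nonneg x))
      (le_inf (negPart_nonneg f) (abs_nonneg x)) inf_le_left inf_le_left
      (posPart_inf_negPart_eq_zero f)
  rw [bandPart, abs_sub_comm, ← sup_sub_inf_eq_abs_sub, h, sub_zero]

lemma abs_bandPart_le_abs_left (x f : α) : |bandPart x f| ≤ |x| := by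
  rw [abs_bandPart]; exact sup_le inf_le_right inf_le_right

lemma abs_bandPart_le_abs (x f : α) : |bandPart x f| ≤ |f| := by
  rw [abs_bandPart, ← posPart_add_negPart f]
  exact sup_le (inf_le_left.trans (le_add_of_nonneg_right (negPart_nonneg f)))
    (inf_le_left.trans (le_add_of_nonneg_left (posPart_nonneg f)))

lemma bandPart_add_bandPart (hxy : |x| ⊓ |y| = 0) (hf : |f| ≤ |x| + |y|) :
    bandPart x f + bandPart y f = f := by
  have hsplit : ∀ c, 0 ≤ c → c ≤ |f| → c ⊓ |x| + c ⊓ |y| = c := fun c hc hcf =>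
    inf_add_inf_eq_of_le_add (abs_nonneg x) (abs_nonneg y) hc hxy (hcf.trans hf)
  calc bandPart x f + bandPart y f = (f⁺ ⊓ |x| + f⁺ ⊓ |y|) - (f⁻ ⊓ |x| + f⁻ ⊓ |y|) := by
        simp only [bandPart]; abel
    _ = f := by
      rw [hsplit _ (posPart_nonneg f) (posPart_le_abs f),
        hsplit _ (negPart_nonneg f) (negPart_le_abs f), posPart_sub_negPart]

lemma fragment_bandPart_of_add (hxy : |x| ⊓ |y| = 0) (hf : Fragment f (x + y)) :
    Fragment (bandPart x f) x := by
  have hfxy : |f| ≤ |x| + |y| := abs_add_eq_of_inf_abs_eq_zero hxy ▸ hf.abs_le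
  have hrest : x + y - f = (x - bandPart x f) + (y - bandPart y f) := by
    conv_lhs => rw [← bandPart_add_bandPart hxy hfxy]
    abel
  have hsub : ∀ z, |z - bandPart z f| ≤ |z| + |z| := fun z => by
    simpa [← sub_eq_add_neg] using (abs_add_le z (-bandPart z f)).trans
      (add_le_add_right (by simpa using abs_bandPart_le_abs_left z f) _)
  have hdisj : |x - bandPart x f| ⊓ |y - bandPart y f| = 0 :=
    inf_eq_zero_of_le (abs_nonneg _) (abs_nonneg _) (hsub x) (hsub y)
      (add_inf_add_eq_zero (abs_nonneg _) (abs_nonneg _) (abs_nonneg _) (abs_nonneg _)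
        hxy hxy hxy hxy)
  have hle : |x - bandPart x f| ≤ |x + y - f| := by
    rw [hrest, abs_add_eq_of_inf_abs_eq_zero hdisj]
    exact le_add_of_nonneg_right (abs_nonneg _)
  exact inf_eq_zero_of_le (abs_nonneg _) (abs_nonneg _) (abs_bandPart_le_abs x f) hle hf

lemma Fragment.exists_add_of_add (hxy : |x| ⊓ |y| = 0) (hf : Fragment f (x + y)) :
    ∃ f₁ f₂, Fragment f₁ x ∧ Fragment f₂ y ∧ f₁ + f₂ = f :=
  ⟨_, _, fragment_bandPart_of_add hxy hf,
    fragment_bandPart_of_add (inf_comm |x| |y| ▸ hxy) (add_comm x y ▸ hf),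
    bandPart_add_bandPart hxy (abs_add_eq_of_inf_abs_eq_zero hxy ▸ hf.abs_le)⟩

end Fragments

section ScalarMultiples

variable {F : Type*} [Lattice F] [AddCommGroup F] [AddLeftMono F] [Module ℝ F] [PosSMulMono ℝ F]

lemma smul_le_smul_of_nonneg_right' {s t : ℝ} {u : F} (hst : s ≤ t) (hu : 0 ≤ u) :
    s • u ≤ t • u :=
  sub_nonneg.1 (sub_smul t s u ▸ smul_nonneg (sub_nonneg.2 hst) hu)

lemma inf_smul_eq_zero {a b : F} {c : ℝ} (ha : 0 ≤ a) (hb : 0 ≤ b) (h : a ⊓ b = 0)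
    (hc : 0 ≤ c) : a ⊓ c • b = 0 :=
  inf_eq_zero_of_le ha (smul_nonneg hc hb) le_rfl
    (by simpa only [Nat.cast_smul_eq_nsmul] using
      smul_le_smul_of_nonneg_right' (Nat.le_ceil c) hb)
    (inf_nsmul_eq_zero ha hb h ⌈c⌉₊)

end ScalarMultiples

section DedekindComplete

variable {F : Type*} [ConditionallyCompleteLattice F] [AddCommGroup F] [AddLeftMono F]

lemma nonpos_of_forall_nsmul_le {z w : F} (h : ∀ n : ℕ, n • z ≤ w) : z ≤ 0 := by
  have hbdd : BddAbove (Set.range fun n : ℕ => n • z) := ⟨w, Set.forall_mem_range.2 h⟩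
  refine (add_le_iff_nonpos_right (⨆ n : ℕ, n • z)).1 (le_sub_iff_add_le.1 ?_)
  exact ciSup_le fun n => le_sub_iff_add_le.2 (succ_nsmul z n ▸ le_ciSup hbdd (n + 1))

lemma nonpos_of_forall_add_le_smul_add [Module ℝ F] [PosSMulMono ℝ F] {z u : F} {b : ℝ → F}
    (hu : 0 ≤ u) (hb : ∀ t, 0 < t → 0 ≤ b t) (h : ∀ t, 0 < t → z + b t ≤ t • u + b (2 * t)) :
    z ≤ 0 := by
  have hiter : ∀ n : ℕ, n • z + b (2⁻¹ ^ n) ≤ (1 - 2⁻¹ ^ n : ℝ) • u + b 1 := by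
    intro n
    induction n with
    | zero => simp
    | succ n ih =>
      have hstep := h (2⁻¹ ^ (n + 1)) (by positivity)
      rw [show (2 : ℝ) * 2⁻¹ ^ (n + 1) = 2⁻¹ ^ n by ring] at hstep
      calc (n + 1) • z + b (2⁻¹ ^ (n + 1)) = n • z + (z + b (2⁻¹ ^ (n + 1))) := by
            rw [succ_nsmul]; abel
        _ ≤ n • z + ((2⁻¹ : ℝ) ^ (n + 1) • u + b (2⁻¹ ^ n)) := add_le_add_right hstep _
        _ = (2⁻¹ : ℝ) ^ (n + 1) • u + (n • z + b (2⁻¹ ^ n)) := by abel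
        _ ≤ (2⁻¹ : ℝ) ^ (n + 1) • u + ((1 - 2⁻¹ ^ n : ℝ) • u + b 1) := add_le_add_right ih _
        _ = (1 - 2⁻¹ ^ (n + 1) : ℝ) • u + b 1 := by
            rw [← add_assoc, ← add_smul]; congr 2; ring
  refine nonpos_of_forall_nsmul_le (w := u + b 1) fun n => ?_
  calc n • z ≤ n • z + b (2⁻¹ ^ n) := le_add_of_nonneg_right (hb _ (by positivity))
    _ ≤ (1 - 2⁻¹ ^ n : ℝ) • u + b 1 := hiter n
    _ ≤ u + b 1 := add_le_add_left
        (by simpa using smul_le_smul_of_nonneg_right' (sub_le_self 1 (by positivity)) hu) _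

end DedekindComplete

namespace IsBandProj

section

variable {F : Type*} [Lattice F] [AddCommGroup F] {ρ : F → F} {x : F}

lemma map_sub (hρ : IsBandProj ρ) (x y : F) : ρ (x - y) = ρ x - ρ y :=
  (AddMonoidHom.mk' ρ hρ.1).map_sub x y

lemma nonneg (hρ : IsBandProj ρ) (hx : 0 ≤ x) : 0 ≤ ρ x := (hρ.2.2 x hx).1

lemma le_self (hρ : IsBandProj ρ) (hx : 0 ≤ x) : ρ x ≤ x := (hρ.2.2 x hx).2

lemma map_sub_self (hρ : IsBandProj ρ) (x : F) : ρ (x - ρ x) = 0 := by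
  rw [hρ.map_sub, hρ.2.1, sub_self]

end

variable {F : Type*} [Lattice F] [AddCommGroup F] [AddLeftMono F] {ρ : F → F} {u x y z : F}

lemma mono (hρ : IsBandProj ρ) (h : x ≤ y) : ρ x ≤ ρ y :=
  sub_nonneg.1 (hρ.map_sub y x ▸ hρ.nonneg (sub_nonneg.2 h))

lemma eq_self_of_le (hρ : IsBandProj ρ) (hz : 0 ≤ z) (hzy : z ≤ y) (hy : ρ y = y) : ρ z = z := by
  have h : z - ρ z ≤ y - ρ y := by
    rw [← sub_nonneg, show y - ρ y - (z - ρ z) = (y - z) - ρ (y - z) by rw [hρ.map_sub]; abel]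
    exact sub_nonneg.2 (hρ.le_self (sub_nonneg.2 hzy))
  rw [hy, sub_self] at h
  exact (sub_eq_zero.1 (le_antisymm h (sub_nonneg.2 (hρ.le_self hz)))).symm

lemma eq_zero_of_le_of_inf_eq_zero (hρ : IsBandProj ρ)
    (hρu : ∀ x : F, 0 ≤ x → (ρ x = 0 ↔ x ⊓ u = 0)) (hz : 0 ≤ z) (hzy : z ≤ ρ y)
    (h : z ⊓ u = 0) : z = 0 :=
  (hρ.eq_self_of_le hz hzy (hρ.2.1 y)).symm.trans ((hρu z hz).2 h)

lemma eq_self_of_le_smul [Module ℝ F] [PosSMulMono ℝ F] (hρ : IsBandProj ρ)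
    (hρu : ∀ x : F, 0 ≤ x → (ρ x = 0 ↔ x ⊓ u = 0)) (hu : 0 ≤ u) {c : ℝ} (hc : 0 ≤ c)
    (hz : 0 ≤ z) (hzu : z ≤ c • u) : ρ z = z := by
  have hw : 0 ≤ z - ρ z := sub_nonneg.2 (hρ.le_self hz)
  have hwu : (z - ρ z) ⊓ c • u = 0 :=
    inf_smul_eq_zero hw hu ((hρu _ hw).1 (hρ.map_sub_self z)) hc
  rw [inf_eq_left.2 ((sub_le_self _ (hρ.nonneg hz)).trans hzu), sub_eq_zero] at hwu
  exact hwu.symm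

end IsBandProj

section UrysonOperators

namespace OrthAdd

variable {E F : Type*} [Lattice E] [AddCommGroup E] [AddCommGroup F] {T R : E → F}

lemma map_zero (hT : OrthAdd T) : T 0 = 0 := by
  simpa using hT 0 0 (by simp [abs])

lemma apply_eq_add_of_fragment (hT : OrthAdd T) {f x : E} (hf : Fragment f x) :
    T x = T f + T (x - f) := by
  simpa using hT f (x - f) hf

lemma add (hT : OrthAdd T) (hR : OrthAdd R) : OrthAdd fun x => T x + R x := fun x y h => by
  simp only [hT x y h, hR x y h]; abel

lemma sub (hT : OrthAdd T) (hR : OrthAdd R) : OrthAdd fun x => T x - R x := fun x y h => by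
  simp only [hT x y h, hR x y h]; abel

lemma comp_add (hT : OrthAdd T) {ρ : F → F} (hρ : ∀ a b, ρ (a + b) = ρ a + ρ b) :
    OrthAdd (ρ ∘ T) := fun x y h => by
  simp only [Function.comp_apply, hT x y h, hρ]

lemma smul_const [Module ℝ F] {φ : E → ℝ} (hφ : OrthAdd φ) (u : F) :
    OrthAdd fun x => φ x • u := fun x y h => by
  simp only [hφ x y h, add_smul]

end OrthAdd

variable {E F : Type*}

lemma OrthAdd.le_apply_of_fragment [Lattice E] [AddCommGroup E] [Lattice F] [AddCommGroup F]
    [AddLeftMono F] {T : E → F} (hT : OrthAdd T) (hTpos : ∀ x, 0 ≤ T x) {f x : E}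
    (hf : Fragment f x) : T f ≤ T x :=
  hT.apply_eq_add_of_fragment hf ▸ le_add_of_nonneg_right (hTpos _)

lemma OrderBoundedMap.of_nonneg_of_le [Preorder E] [Preorder F] [Zero F] {T R : E → F}
    (hT : OrderBoundedMap T) (hR : ∀ x, 0 ≤ R x) (hRT : ∀ x, R x ≤ T x) :
    OrderBoundedMap R := fun a b => by
  obtain ⟨_, d, h⟩ := hT a b
  exact ⟨0, d, fun x hx => ⟨hR x, (hRT x).trans (h x hx).2⟩⟩

lemma OrderBoundedMap.sub [Preorder E] [Lattice F] [AddCommGroup F] [AddLeftMono F]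
    {T R : E → F} (hT : OrderBoundedMap T) (hR : OrderBoundedMap R) :
    OrderBoundedMap fun x => T x - R x := fun a b => by
  obtain ⟨c₁, d₁, h₁⟩ := hT a b
  obtain ⟨c₂, d₂, h₂⟩ := hR a b
  exact ⟨c₁ - d₂, d₁ - c₂, fun x hx =>
    ⟨sub_le_sub (h₁ x hx).1 (h₂ x hx).2, sub_le_sub (h₁ x hx).2 (h₂ x hx).1⟩⟩

variable [Lattice E] [AddCommGroup E] [Lattice F] [AddCommGroup F]

lemma uDisjointPos_of_inf_eq_zero {T S : E → F} (h : ∀ x, T x ⊓ S x = 0) : UDisjointPos T S :=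
  fun _ _ hVT hVS x => (le_inf (hVT x) (hVS x)).trans_eq (h x)

lemma le_of_uDisjointPos_sub [AddLeftMono F] {Q T R : E → F} (hQ : Uryson Q) (hR : Uryson R)
    (hRpos : ∀ x, 0 ≤ R x) (hQT : ∀ x, Q x ≤ T x) (h : UDisjointPos (fun x => T x - R x) Q)
    (x : E) : Q x ≤ R x :=
  sub_nonpos.1 <| h (fun x => Q x - R x) ⟨hQ.1.sub hR.1, hQ.2.sub hR.2⟩
    (fun x => sub_le_sub_right (hQT x) _) (fun x => sub_le_self _ (hRpos x)) x

end UrysonOperators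

section FragmentExtrema

variable {E F : Type*} [Lattice E] [AddCommGroup E]

def fragSup [SupSet F] (φ : E → ℝ) (G : E → F) (δ : ℝ) (x : E) : F :=
  sSup {w | ∃ g, Fragment g x ∧ φ g ≤ δ ∧ w = G g}

def fragLim [SupSet F] [InfSet F] (φ : E → ℝ) (G : E → F) (x : E) : F :=
  sInf {v | ∃ δ : ℝ, 0 < δ ∧ v = fragSup φ G δ x}

/-- The value at `x` of `R ⊓ S` in `U(E, F)`. -/
def fragInf [Add F] [InfSet F] (R S : E → F) (x : E) : F :=
  sInf {v | ∃ f, Fragment f x ∧ v = R f + S (x - f)}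

variable [ConditionallyCompleteLattice F] {φ : E → ℝ} {G R S : E → F} {δ δ' : ℝ} {c : F}
  {f g x y : E}

lemma le_fragLim (h : ∀ δ, 0 < δ → c ≤ fragSup φ G δ x) : c ≤ fragLim φ G x :=
  le_csInf ⟨_, 1, one_pos, rfl⟩ (by rintro _ ⟨δ, hδ, rfl⟩; exact h δ hδ)

lemma fragSup_le [AddLeftMono E] (hφ : OrthAdd φ) (hδ : 0 ≤ δ)
    (h : ∀ g, Fragment g x → φ g ≤ δ → G g ≤ c) : fragSup φ G δ x ≤ c :=
  csSup_le ⟨G 0, 0, fragment_zero_left x, hφ.map_zero ▸ hδ, rfl⟩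
    (by rintro _ ⟨g, hg, hφg, rfl⟩; exact h g hg hφg)

lemma le_fragInf [AddLeftMono E] [AddCommGroup F] (h : ∀ f, Fragment f x → c ≤ R f + S (x - f)) :
    c ≤ fragInf R S x :=
  le_csInf ⟨_, 0, fragment_zero_left x, rfl⟩ (by rintro _ ⟨f, hf, rfl⟩; exact h f hf)

variable [AddCommGroup F] [AddLeftMono F]

lemma le_fragSup (hG : OrthAdd G) (hGpos : ∀ x, 0 ≤ G x) (hg : Fragment g x) (hφg : φ g ≤ δ) :
    G g ≤ fragSup φ G δ x :=
  le_csSup ⟨G x, by rintro _ ⟨g, hg, -, rfl⟩; exact hG.le_apply_of_fragment hGpos hg⟩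
    ⟨g, hg, hφg, rfl⟩

lemma fragInf_le (hRpos : ∀ x, 0 ≤ R x) (hSpos : ∀ x, 0 ≤ S x) (hf : Fragment f x) :
    fragInf R S x ≤ R f + S (x - f) :=
  csInf_le ⟨0, by rintro _ ⟨f, -, rfl⟩; exact add_nonneg (hRpos f) (hSpos _)⟩ ⟨f, hf, rfl⟩

variable [AddLeftMono E]

lemma fragSup_nonneg (hφ : OrthAdd φ) (hG : OrthAdd G) (hGpos : ∀ x, 0 ≤ G x) (hδ : 0 ≤ δ)
    (x : E) : 0 ≤ fragSup φ G δ x :=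
  hG.map_zero ▸ le_fragSup hG hGpos (fragment_zero_left x) (hφ.map_zero ▸ hδ)

lemma fragSup_le_apply (hφ : OrthAdd φ) (hG : OrthAdd G) (hGpos : ∀ x, 0 ≤ G x) (hδ : 0 ≤ δ)
    (x : E) : fragSup φ G δ x ≤ G x :=
  fragSup_le hφ hδ fun _ hg _ => hG.le_apply_of_fragment hGpos hg

lemma fragSup_eq_apply (hφ : OrthAdd φ) (hG : OrthAdd G) (hGpos : ∀ x, 0 ≤ G x)
    (hδ : φ x ≤ δ) (hδ₀ : 0 ≤ δ) : fragSup φ G δ x = G x :=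
  (fragSup_le_apply hφ hG hGpos hδ₀ x).antisymm (le_fragSup hG hGpos (fragment_refl x) hδ)

lemma fragSup_mono (hφ : OrthAdd φ) (hG : OrthAdd G) (hGpos : ∀ x, 0 ≤ G x) (hδ : 0 ≤ δ)
    (hδδ' : δ ≤ δ') (x : E) : fragSup φ G δ x ≤ fragSup φ G δ' x :=
  fragSup_le hφ hδ fun _ hg hφg => le_fragSup hG hGpos hg (hφg.trans hδδ')

lemma fragSup_add_le (hφ : OrthAdd φ) (hφpos : ∀ x, 0 ≤ φ x) (hG : OrthAdd G)
    (hGpos : ∀ x, 0 ≤ G x) (hxy : |x| ⊓ |y| = 0) (hδ : 0 ≤ δ) :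
    fragSup φ G δ (x + y) ≤ fragSup φ G δ x + fragSup φ G δ y := by
  refine fragSup_le hφ hδ fun g hg hφg => ?_
  obtain ⟨g₁, g₂, hg₁, hg₂, rfl⟩ := hg.exists_add_of_add hxy
  have hdisj := Fragment.abs_inf_abs_eq_zero hxy hg₁ hg₂
  rw [hφ _ _ hdisj] at hφg
  rw [hG _ _ hdisj]
  exact add_le_add (le_fragSup hG hGpos hg₁ (by linarith [hφpos g₂]))
    (le_fragSup hG hGpos hg₂ (by linarith [hφpos g₁]))

lemma fragSup_add_fragSup_le (hφ : OrthAdd φ) (hG : OrthAdd G) (hGpos : ∀ x, 0 ≤ G x)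
    (hxy : |x| ⊓ |y| = 0) (hδ : 0 ≤ δ) (hδ' : 0 ≤ δ') :
    fragSup φ G δ x + fragSup φ G δ' y ≤ fragSup φ G (δ + δ') (x + y) := by
  rw [← le_sub_iff_add_le]
  refine fragSup_le hφ hδ fun g₁ hg₁ hφ₁ => ?_
  rw [le_sub_comm]
  refine fragSup_le hφ hδ' fun g₂ hg₂ hφ₂ => ?_
  rw [le_sub_iff_add_le', ← hG _ _ (Fragment.abs_inf_abs_eq_zero hxy hg₁ hg₂)]
  exact le_fragSup hG hGpos (hg₁.add hxy hg₂)
    (by rw [hφ _ _ (Fragment.abs_inf_abs_eq_zero hxy hg₁ hg₂)]; linarith)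

lemma fragLim_le_fragSup (hφ : OrthAdd φ) (hG : OrthAdd G) (hGpos : ∀ x, 0 ≤ G x)
    (hδ : 0 < δ) (x : E) : fragLim φ G x ≤ fragSup φ G δ x :=
  csInf_le ⟨0, by rintro _ ⟨δ, hδ, rfl⟩; exact fragSup_nonneg hφ hG hGpos hδ.le x⟩ ⟨δ, hδ, rfl⟩

lemma fragLim_nonneg (hφ : OrthAdd φ) (hG : OrthAdd G) (hGpos : ∀ x, 0 ≤ G x) (x : E) :
    0 ≤ fragLim φ G x :=
  le_fragLim fun _ hδ => fragSup_nonneg hφ hG hGpos hδ.le x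

lemma fragLim_le_apply (hφ : OrthAdd φ) (hG : OrthAdd G) (hGpos : ∀ x, 0 ≤ G x) (x : E) :
    fragLim φ G x ≤ G x :=
  (fragLim_le_fragSup hφ hG hGpos one_pos x).trans (fragSup_le_apply hφ hG hGpos zero_le_one x)

lemma orthAdd_fragLim (hφ : OrthAdd φ) (hφpos : ∀ x, 0 ≤ φ x) (hG : OrthAdd G)
    (hGpos : ∀ x, 0 ≤ G x) : OrthAdd (fragLim φ G) := by
  intro x y hxy
  refine le_antisymm ?_ (le_fragLim fun δ hδ => ?_)
  · rw [← sub_le_iff_le_add]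
    refine le_fragLim fun δ hδ => ?_
    rw [sub_le_comm]
    refine le_fragLim fun δ' hδ' => ?_
    rw [sub_le_iff_le_add']
    have hmin : 0 < min δ δ' := lt_min hδ hδ'
    calc _ ≤ fragSup φ G (min δ δ') (x + y) := fragLim_le_fragSup hφ hG hGpos hmin _
      _ ≤ fragSup φ G (min δ δ') x + fragSup φ G (min δ δ') y :=
          fragSup_add_le hφ hφpos hG hGpos hxy hmin.le
      _ ≤ fragSup φ G δ x + fragSup φ G δ' y :=
          add_le_add (fragSup_mono hφ hG hGpos hmin.le (min_le_left _ _) x)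
            (fragSup_mono hφ hG hGpos hmin.le (min_le_right _ _) y)
  · calc _ ≤ fragSup φ G (δ / 2) x + fragSup φ G (δ / 2) y :=
          add_le_add (fragLim_le_fragSup hφ hG hGpos (half_pos hδ) x)
            (fragLim_le_fragSup hφ hG hGpos (half_pos hδ) y)
      _ ≤ fragSup φ G (δ / 2 + δ / 2) (x + y) :=
          fragSup_add_fragSup_le hφ hG hGpos hxy (half_pos hδ).le (half_pos hδ).le
      _ = fragSup φ G δ (x + y) := by rw [add_halves]

lemma setOf_fragSup_mul_eq (hφ : OrthAdd φ) (hφpos : ∀ x, 0 ≤ φ x) (hG : OrthAdd G)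
    (hGpos : ∀ x, 0 ≤ G x) (x : E) :
    {v | ∃ ε : ℝ, 0 < ε ∧ v = fragSup φ G (ε * φ x) x} =
      {v | ∃ δ : ℝ, 0 < δ ∧ v = fragSup φ G δ x} := by
  ext v
  rcases (hφpos x).eq_or_lt with h0 | hpos
  · have hconst : ∀ δ, 0 ≤ δ → fragSup φ G δ x = G x := fun δ hδ =>
      fragSup_eq_apply hφ hG hGpos (h0 ▸ hδ) hδ
    have hzero : ∀ ε, fragSup φ G (ε * φ x) x = G x := fun ε => hconst _ (by rw [← h0, mul_zero])
    exact ⟨fun ⟨ε, hε, hv⟩ => ⟨ε, hε, by rw [hv, hzero, hconst ε hε.le]⟩,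
      fun ⟨δ, hδ, hv⟩ => ⟨δ, hδ, by rw [hv, hzero, hconst δ hδ.le]⟩⟩
  · exact ⟨fun ⟨ε, hε, hv⟩ => ⟨ε * φ x, mul_pos hε hpos, hv⟩,
      fun ⟨δ, hδ, hv⟩ => ⟨δ / φ x, div_pos hδ hpos, by rwa [div_mul_cancel₀ δ hpos.ne']⟩⟩

lemma fragInf_nonneg (hRpos : ∀ x, 0 ≤ R x) (hSpos : ∀ x, 0 ≤ S x) (x : E) :
    0 ≤ fragInf R S x :=
  le_fragInf fun f _ => add_nonneg (hRpos f) (hSpos _)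

lemma fragInf_le_left (hS : OrthAdd S) (hRpos : ∀ x, 0 ≤ R x) (hSpos : ∀ x, 0 ≤ S x) (x : E) :
    fragInf R S x ≤ R x := by
  simpa [hS.map_zero] using fragInf_le hRpos hSpos (fragment_refl x)

lemma fragInf_le_right (hR : OrthAdd R) (hRpos : ∀ x, 0 ≤ R x) (hSpos : ∀ x, 0 ≤ S x)
    (x : E) : fragInf R S x ≤ S x := by
  simpa [hR.map_zero] using fragInf_le hRpos hSpos (fragment_zero_left x)

lemma orthAdd_fragInf (hR : OrthAdd R) (hS : OrthAdd S) (hRpos : ∀ x, 0 ≤ R x)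
    (hSpos : ∀ x, 0 ≤ S x) : OrthAdd (fragInf R S) := by
  intro x y hxy
  have hsum : ∀ f₁ f₂, Fragment f₁ x → Fragment f₂ y →
      R (f₁ + f₂) + S (x + y - (f₁ + f₂)) = (R f₁ + S (x - f₁)) + (R f₂ + S (y - f₂)) := by
    intro f₁ f₂ h₁ h₂
    rw [hR _ _ (Fragment.abs_inf_abs_eq_zero hxy h₁ h₂),
      show x + y - (f₁ + f₂) = (x - f₁) + (y - f₂) by abel,
      hS _ _ (Fragment.abs_inf_abs_eq_zero hxy h₁.compl h₂.compl)]
    abel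
  refine le_antisymm ?_ (le_fragInf fun f hf => ?_)
  · rw [← sub_le_iff_le_add]
    refine le_fragInf fun f₁ h₁ => ?_
    rw [sub_le_comm]
    refine le_fragInf fun f₂ h₂ => ?_
    rw [sub_le_iff_le_add', ← hsum f₁ f₂ h₁ h₂]
    exact fragInf_le hRpos hSpos (h₁.add hxy h₂)
  · obtain ⟨f₁, f₂, h₁, h₂, rfl⟩ := hf.exists_add_of_add hxy
    rw [hsum f₁ f₂ h₁ h₂]
    exact add_le_add (fragInf_le hRpos hSpos h₁) (fragInf_le hRpos hSpos h₂)

lemma fragInf_eq_zero_of_uDisjointPos (hR : Uryson R) (hS : OrthAdd S) (hRpos : ∀ x, 0 ≤ R x)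
    (hSpos : ∀ x, 0 ≤ S x) (h : UDisjointPos R S) (x : E) : fragInf R S x = 0 :=
  le_antisymm
    (h _ ⟨orthAdd_fragInf hR.1 hS hRpos hSpos, hR.2.of_nonneg_of_le (fragInf_nonneg hRpos hSpos)
      (fragInf_le_left hS hRpos hSpos)⟩ (fragInf_le_left hS hRpos hSpos)
      (fragInf_le_right hR.1 hRpos hSpos) x)
    (fragInf_nonneg hRpos hSpos x)

end FragmentExtrema

section BandOfRankOne

variable {E F : Type*} [Lattice E] [AddCommGroup E] [Lattice F] [AddCommGroup F] [AddLeftMono F]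
  [Module ℝ F] [PosSMulMono ℝ F] {φ : E → ℝ} {u : F} {ρ : F → F} {T R : E → F}

lemma sub_map_apply_eq_of_sub_mem_band (hφpos : ∀ x, 0 ≤ φ x) (hu : 0 ≤ u) (hρ : IsBandProj ρ)
    (hρu : ∀ x : F, 0 ≤ x → (ρ x = 0 ↔ x ⊓ u = 0)) (hT : Uryson T) (hR : Uryson R)
    (hRpos : ∀ x, 0 ≤ R x) (hRT : ∀ x, R x ≤ T x)
    (hband : ∀ U : E → F, Uryson U → (∀ x, 0 ≤ U x) →
      UDisjointPos U (fun e => φ e • u) → UDisjointPos (fun x => T x - R x) U) (x : E) :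
    T x - ρ (T x) = R x - ρ (R x) := by
  have hD : OrthAdd fun x => T x - R x := hT.1.sub hR.1
  have hDpos : ∀ x, 0 ≤ T x - R x := fun x => sub_nonneg.2 (hRT x)
  set W : E → F := fun x => (T x - R x) - ρ (T x - R x)
  have hWpos : ∀ x, 0 ≤ W x := fun x => sub_nonneg.2 (hρ.le_self (hDpos x))
  have hWle : ∀ x, W x ≤ T x - R x := fun x => sub_le_self _ (hρ.nonneg (hDpos x))
  have hW : Uryson W := ⟨hD.sub (hD.comp_add hρ.1),
    hT.2.of_nonneg_of_le hWpos fun x => (hWle x).trans (sub_le_self _ (hRpos x))⟩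
  -- `W` takes values in `{u}^⊥`, hence is disjoint from `φ ⊗ u`
  have hWS : UDisjointPos W fun e => φ e • u := uDisjointPos_of_inf_eq_zero fun x =>
    inf_smul_eq_zero (hWpos x) hu ((hρu _ (hWpos x)).1 (hρ.map_sub_self _)) (hφpos x)
  have hW0 : W x = 0 :=
    le_antisymm (hband W hW hWpos hWS W hW hWle (fun _ => le_rfl) x) (hWpos x)
  rw [sub_eq_zero, hρ.map_sub] at hW0
  rw [sub_eq_sub_iff_sub_eq_sub, hW0]

end BandOfRankOne

section SigmaFormula

variable {E F : Type*} [Lattice E] [AddCommGroup E] [AddLeftMono E]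
  [ConditionallyCompleteLattice F] [AddCommGroup F] [AddLeftMono F]
  {φ : E → ℝ} {u : F} {ρ : F → F} {T R : E → F}

/-- The right-hand side of the formula for `σ_S T`, with `δ` in place of `ε φ(e)`. -/
def sigmaFormula (φ : E → ℝ) (ρ : F → F) (T : E → F) (x : E) : F :=
  (T x - ρ (T x)) + fragLim φ (ρ ∘ T) x

lemma map_sigmaFormula_le (hφ : OrthAdd φ) (hρ : IsBandProj ρ) (hT : OrthAdd T)
    (hTpos : ∀ x, 0 ≤ T x) (x : E) : ρ (sigmaFormula φ ρ T x) ≤ fragLim φ (ρ ∘ T) x := by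
  rw [sigmaFormula, hρ.1, hρ.map_sub_self, zero_add]
  exact hρ.le_self (fragLim_nonneg hφ (hT.comp_add hρ.1) (fun x => hρ.nonneg (hTpos x)) x)

lemma sigmaFormula_nonneg (hφ : OrthAdd φ) (hρ : IsBandProj ρ) (hT : OrthAdd T)
    (hTpos : ∀ x, 0 ≤ T x) (x : E) : 0 ≤ sigmaFormula φ ρ T x :=
  add_nonneg (sub_nonneg.2 (hρ.le_self (hTpos x)))
    (fragLim_nonneg hφ (hT.comp_add hρ.1) (fun x => hρ.nonneg (hTpos x)) x)

lemma sigmaFormula_le (hφ : OrthAdd φ) (hρ : IsBandProj ρ) (hT : OrthAdd T)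
    (hTpos : ∀ x, 0 ≤ T x) (x : E) : sigmaFormula φ ρ T x ≤ T x := by
  have hJ := fragLim_le_apply hφ (hT.comp_add hρ.1) (fun x => hρ.nonneg (hTpos x)) x
  exact (add_le_add_right hJ _).trans_eq (sub_add_cancel _ _)

lemma uryson_sigmaFormula (hφ : OrthAdd φ) (hφpos : ∀ x, 0 ≤ φ x) (hρ : IsBandProj ρ)
    (hT : Uryson T) (hTpos : ∀ x, 0 ≤ T x) : Uryson (sigmaFormula φ ρ T) :=
  ⟨(hT.1.sub (hT.1.comp_add hρ.1)).add
      (orthAdd_fragLim hφ hφpos (hT.1.comp_add hρ.1) fun x => hρ.nonneg (hTpos x)),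
    hT.2.of_nonneg_of_le (sigmaFormula_nonneg hφ hρ hT.1 hTpos)
      (sigmaFormula_le hφ hρ hT.1 hTpos)⟩

variable [Module ℝ F] [PosSMulMono ℝ F]

lemma map_apply_le_fragSup (hφ : OrthAdd φ) (hφpos : ∀ x, 0 ≤ φ x) (hu : 0 ≤ u)
    (hρ : IsBandProj ρ) (hρu : ∀ x : F, 0 ≤ x → (ρ x = 0 ↔ x ⊓ u = 0)) (hT : OrthAdd T)
    (hTpos : ∀ x, 0 ≤ T x) (hR : Uryson R) (hRpos : ∀ x, 0 ≤ R x) (hRT : ∀ x, R x ≤ T x)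
    (hRS : UDisjointPos R fun e => φ e • u) {δ : ℝ} (hδ : 0 < δ) (e : E) :
    ρ (R e) ≤ fragSup φ (ρ ∘ T) δ e := by
  have hG : OrthAdd (ρ ∘ T) := hT.comp_add hρ.1
  have hGpos : ∀ x, 0 ≤ (ρ ∘ T) x := fun x => hρ.nonneg (hTpos x)
  have hSpos : ∀ x, 0 ≤ φ x • u := fun x => smul_nonneg (hφpos x) hu
  set a := ρ (R e) - fragSup φ (ρ ∘ T) δ e
  -- for `f ⊑ e`, either `φ (e - f) ≤ δ` bounds `a` by `R f`, or `S (e - f) ≥ δ u`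
  have hinf : a ⊓ δ • u ≤ 0 := by
    rw [← fragInf_eq_zero_of_uDisjointPos hR (hφ.smul_const u) hRpos hSpos hRS e]
    refine le_fragInf fun f hf => ?_
    by_cases hsmall : φ (e - f) ≤ δ
    · refine inf_le_left.trans ((sub_le_iff_le_add.2 ?_).trans
        (le_add_of_nonneg_right (hSpos _)))
      calc ρ (R e) = ρ (R f) + ρ (R (e - f)) := by rw [hR.1.apply_eq_add_of_fragment hf, hρ.1]
        _ ≤ R f + fragSup φ (ρ ∘ T) δ e :=
          add_le_add (hρ.le_self (hRpos f))
            ((hρ.mono (hRT _)).trans (le_fragSup hG hGpos hf.compl hsmall))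
    · exact inf_le_right.trans ((smul_le_smul_of_nonneg_right' (not_le.1 hsmall).le hu).trans
        (le_add_of_nonneg_left (hRpos f)))
  have hau : a⁺ ⊓ u = 0 := by
    simpa [smul_smul, inv_mul_cancel₀ hδ.ne'] using
      inf_smul_eq_zero (posPart_nonneg a) (smul_nonneg hδ.le hu)
        (posPart_inf_eq_zero_of_inf_nonpos (smul_nonneg hδ.le hu) hinf) (inv_nonneg.2 hδ.le)
  have hale : a⁺ ≤ ρ (R e) :=
    sup_le (sub_le_self _ (fragSup_nonneg hφ hG hGpos hδ.le e)) (hρ.nonneg (hRpos e))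
  exact sub_nonpos.1 ((le_posPart a).trans
    (hρ.eq_zero_of_le_of_inf_eq_zero hρu (posPart_nonneg a) hale hau).le)

lemma posPart_add_fragSup_le (hφ : OrthAdd φ) (hφpos : ∀ x, 0 ≤ φ x) (hu : 0 ≤ u)
    (hρ : IsBandProj ρ) (hρu : ∀ x : F, 0 ≤ x → (ρ x = 0 ↔ x ⊓ u = 0)) (hT : OrthAdd T)
    (hTpos : ∀ x, 0 ≤ T x) {V : E → F} (hV : OrthAdd V)
    (hVσ : ∀ x, V x ≤ sigmaFormula φ ρ T x) (hVS : ∀ x, V x ≤ φ x • u) {t : ℝ} (ht : 0 < t)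
    (x : E) : (V x)⁺ + fragSup φ (ρ ∘ T) t x ≤ t • u + fragSup φ (ρ ∘ T) (2 * t) x := by
  have hG : OrthAdd (ρ ∘ T) := hT.comp_add hρ.1
  have hGpos : ∀ x, 0 ≤ (ρ ∘ T) x := fun x => hρ.nonneg (hTpos x)
  have hzρ : ρ (V x)⁺ = (V x)⁺ := hρ.eq_self_of_le_smul hρu hu (hφpos x) (posPart_nonneg _)
    (sup_le (hVS x) (smul_nonneg (hφpos x) hu))
  rw [add_comm, ← le_sub_iff_add_le]
  refine fragSup_le hφ ht.le fun g hg hφg => ?_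
  rw [le_sub_iff_add_le']
  have hz : (V x)⁺ ≤ φ g • u + sigmaFormula φ ρ T (x - g) :=
    sup_le (hV.apply_eq_add_of_fragment hg ▸ add_le_add (hVS g) (hVσ _))
      (add_nonneg (smul_nonneg (hφpos g) hu) (sigmaFormula_nonneg hφ hρ hT hTpos _))
  calc (V x)⁺ + (ρ ∘ T) g ≤ ρ (φ g • u + sigmaFormula φ ρ T (x - g)) + (ρ ∘ T) g :=
        add_le_add_left (hzρ.symm.trans_le (hρ.mono hz)) _
    _ = ρ (φ g • u) + (ρ (sigmaFormula φ ρ T (x - g)) + (ρ ∘ T) g) := by rw [hρ.1, add_assoc]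
    _ ≤ t • u + (fragSup φ (ρ ∘ T) t (x - g) + fragSup φ (ρ ∘ T) t g) :=
        add_le_add ((hρ.le_self (smul_nonneg (hφpos g) hu)).trans
            (smul_le_smul_of_nonneg_right' hφg hu))
          (add_le_add ((map_sigmaFormula_le hφ hρ hT hTpos _).trans
            (fragLim_le_fragSup hφ hG hGpos ht _)) (le_fragSup hG hGpos (fragment_refl g) hφg))
    _ ≤ t • u + fragSup φ (ρ ∘ T) (2 * t) x := by
        rw [add_comm (fragSup _ _ _ (x - g)), two_mul]
        simpa using add_le_add_right (fragSup_add_fragSup_le hφ hG hGpos hg ht.le ht.le) (t • u)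

lemma uDisjointPos_sigmaFormula (hφ : OrthAdd φ) (hφpos : ∀ x, 0 ≤ φ x) (hu : 0 ≤ u)
    (hρ : IsBandProj ρ) (hρu : ∀ x : F, 0 ≤ x → (ρ x = 0 ↔ x ⊓ u = 0)) (hT : OrthAdd T)
    (hTpos : ∀ x, 0 ≤ T x) : UDisjointPos (sigmaFormula φ ρ T) fun e => φ e • u :=
  fun _ hV hVσ hVS x => (le_posPart _).trans <|
    nonpos_of_forall_add_le_smul_add hu
      (fun _ ht => fragSup_nonneg hφ (hT.comp_add hρ.1) (fun x => hρ.nonneg (hTpos x)) ht.le x)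
      fun _ ht => posPart_add_fragSup_le hφ hφpos hu hρ hρu hT hTpos hV.1 hVσ hVS ht x

end SigmaFormula

/-- Here `ρu` is the band projection onto `{u}^⊥⊥` and `R` plays the role of `σ_S T`: a positive
Uryson operator with `R ≤ T`, disjoint from `S`, and such that `T - R` lies in `{S}^⊥⊥`. -/
theorem stmt9_general {E F : Type} [Lattice E] [AddCommGroup E]
    [CovariantClass E E (· + ·) (· ≤ ·)]
    [ConditionallyCompleteLattice F] [AddCommGroup F]
    [CovariantClass F F (· + ·) (· ≤ ·)] [Module ℝ F] [PosSMulMono ℝ F]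
    (φ : E → ℝ) (hφ : Uryson φ) (hφpos : ∀ x, 0 ≤ φ x)
    (u : F) (hu : 0 ≤ u)
    (S : E → F) (hSdef : ∀ e, S e = φ e • u)
    (ρu : F → F) (hρu : IsBandProj ρu)
    (hρuband : ∀ x : F, 0 ≤ x → (ρu x = 0 ↔ x ⊓ u = 0))
    (T : E → F) (hT : Uryson T) (hTpos : ∀ x, 0 ≤ T x)
    (R : E → F) (hR : Uryson R) (hRpos : ∀ x, 0 ≤ R x) (hRT : ∀ x, R x ≤ T x)
    (hRperp : UDisjointPos R S)
    (hband : ∀ U : E → F, Uryson U → (∀ x, 0 ≤ U x) →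
      UDisjointPos U S → UDisjointPos (fun x => T x - R x) U) :
    ∀ e : E,
      R e = (T e - ρu (T e)) +
        sInf {v : F | ∃ ε : ℝ, 0 < ε ∧
          v = sSup {w : F | ∃ f : E, Fragment f e ∧ φ f ≤ ε * φ e ∧ w = ρu (T f)}} := by
  intro e
  obtain rfl : S = fun e => φ e • u := funext hSdef
  have hσ := uryson_sigmaFormula hφ.1 hφpos hρu hT hTpos
  have hσR : sigmaFormula φ ρu T e ≤ R e :=
    le_of_uDisjointPos_sub hσ hR hRpos (sigmaFormula_le hφ.1 hρu hT.1 hTpos)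
      (hband _ hσ (sigmaFormula_nonneg hφ.1 hρu hT.1 hTpos)
        (uDisjointPos_sigmaFormula hφ.1 hφpos hu hρu hρuband hT.1 hTpos)) e
  have hρR : ρu (R e) ≤ fragLim φ (ρu ∘ T) e := le_fragLim fun _ hδ =>
    map_apply_le_fragSup hφ.1 hφpos hu hρu hρuband hT.1 hTpos hR hRpos hRT hRperp hδ e
  have hRe : R e = (T e - ρu (T e)) + ρu (R e) := by
    rw [sub_map_apply_eq_of_sub_mem_band hφpos hu hρu hρuband hT hR hRpos hRT hband e,
      sub_add_cancel]
  have key : R e = (T e - ρu (T e)) + fragLim φ (ρu ∘ T) e :=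
    le_antisymm (hRe.trans_le (add_le_add_right hρR _)) hσR
  rwa [fragLim, ← setOf_fragSup_mul_eq hφ.1 hφpos (hT.1.comp_add hρu.1)
    (fun x => hρu.nonneg (hTpos x)) e] at key

/-- Formula for `σ_S T` where `S = φ ⊗ u` is the one-dimensional positive abstract Uryson
operator `e ↦ φ(e) • u` (`φ : E → ℝ` a positive abstract Uryson functional, `u ∈ F₊`).
Here `ρu` is the band projection onto `{u}^⊥⊥` and `R` plays the role of `σ_S T`:
a positive Uryson operator with `R ≤ T`, disjoint from `S`, and such that `T - R` lies in
the band `{S}^⊥⊥`. Then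
`R e = ρu^⊥ (T e) + inf_{ε>0} sup { ρu (T f) : φ f ≤ ε φ e, f ⊑ e }`. -/
theorem stmt9 {E F : Type} [Lattice E] [AddCommGroup E]
    [CovariantClass E E (· + ·) (· ≤ ·)] [Module ℝ E]
    [ConditionallyCompleteLattice F] [AddCommGroup F]
    [CovariantClass F F (· + ·) (· ≤ ·)] [Module ℝ F] [PosSMulMono ℝ F]
    (φ : E → ℝ) (hφ : Uryson φ) (hφpos : ∀ x, 0 ≤ φ x)
    (u : F) (hu : 0 ≤ u)
    (S : E → F) (hSdef : ∀ e, S e = φ e • u)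
    (ρu : F → F) (hρu : IsBandProj ρu)
    (hρuband : ∀ x : F, 0 ≤ x → (ρu x = 0 ↔ x ⊓ u = 0))
    (T : E → F) (hT : Uryson T) (hTpos : ∀ x, 0 ≤ T x)
    (R : E → F) (hR : Uryson R) (hRpos : ∀ x, 0 ≤ R x) (hRT : ∀ x, R x ≤ T x)
    (hRperp : UDisjointPos R S)
    (hband : ∀ U : E → F, Uryson U → (∀ x, 0 ≤ U x) →
      UDisjointPos U S → UDisjointPos (fun x => T x - R x) U) :
    ∀ e : E,
      R e = (T e - ρu (T e)) +
        sInf {v : F | ∃ ε : ℝ, 0 < ε ∧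
          v = sSup {w : F | ∃ f : E, Fragment f e ∧ φ f ≤ ε * φ e ∧ w = ρu (T f)}} :=
  stmt9_general φ hφ hφpos u hu S hSdef ρu hρu hρuband T hT hTpos R hR hRpos hRT hRperp hband
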